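/- Let F be an independent set of size n−1 in w(H), written as F = {x_i : i ∈ S} ∪ {y_j : j ∈ T} with S, T disjoint and S ∪ T = {1,...,n} \ {q}. Then the maximal independent sets containing F are exactly: F ∪ {y_q}, and additionally F ∪ {x_q} in the case that {x_i : i ∈ S} ∪ {x_q} is an independent set of H. -/

import Mathlib

def whisker {n : ℕ} (H : SimpleGraph (Fin n)) : SimpleGraph (Fin n ⊕ Fin n) :=
  SimpleGraph.fromRel (fun u v =>
    (∃ i j, H.Adj i j ∧ u = Sum.inl i ∧ v = Sum.inl j) ∨ ∃ i, u = Sum.inl i ∧ v = Sum.inr i)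

def IsIndep {V : Type*} (G : SimpleGraph V) (S : Set V) : Prop :=
  ∀ u ∈ S, ∀ v ∈ S, ¬ G.Adj u v

/-- A maximal independent set: an independent set not properly contained in
another independent set. -/
def MaxIndep {V : Type*} [DecidableEq V] (G : SimpleGraph V) (F : Finset V) : Prop :=
  IsIndep G ↑F ∧ ∀ F' : Finset V, IsIndep G ↑F' → F ⊆ F' → F = F'

/-!
Every index `i ≠ q` contributes exactly one of `x_i`, `y_i` to `F`, and the other one is
adjacent to it, so an independent superset of `F` can only add `x_q` or `y_q`, and not both
since they are adjacent. Hence `F ∪ {y_q}`, which is always independent, is maximal, `F` itself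
is not, and `F ∪ {x_q}` is maximal exactly when it is independent, i.e. when `S ∪ {q}` is
independent in `H`.
-/

section IsIndep

variable {V : Type*} {G : SimpleGraph V}

theorem IsIndep.mono {s t : Set V} (ht : IsIndep G t) (hst : s ⊆ t) : IsIndep G s :=
  fun u hu v hv => ht u (hst hu) v (hst hv)

theorem isIndep_insert {a : V} {s : Set V} :
    IsIndep G (insert a s) ↔ IsIndep G s ∧ ∀ u ∈ s, ¬ G.Adj a u := by
  refine ⟨fun h => ⟨h.mono (Set.subset_insert a s),
    fun u hu => h a (Set.mem_insert a s) u (Set.mem_insert_of_mem a hu)⟩, ?_⟩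
  rintro ⟨hs, ha⟩ u (rfl | hu) v (rfl | hv)
  · exact G.irrefl
  · exact ha v hv
  · exact fun h => ha u hu h.symm
  · exact hs u hu v hv

variable [DecidableEq V] {F M : Finset V} {a b : V}

theorem IsIndep.subset_insert_insert
    (hdom : ∀ v ∉ F, v ≠ a → v ≠ b → ∃ u ∈ F, G.Adj v u)
    (hM : IsIndep G ↑M) (hFM : F ⊆ M) : M ⊆ insert a (insert b F) := by
  intro v hv
  by_contra hv'
  simp only [Finset.mem_insert, not_or] at hv'
  obtain ⟨u, hu, hvu⟩ := hdom v hv'.2.2 hv'.1 hv'.2.1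
  exact hM v hv u (hFM hu) hvu

theorem IsIndep.subset_insert_of_mem
    (hdom : ∀ v ∉ F, v ≠ a → v ≠ b → ∃ u ∈ F, G.Adj v u) (hab : G.Adj a b)
    (hM : IsIndep G ↑M) (hFM : F ⊆ M) (hbM : b ∈ M) : M ⊆ insert b F := by
  intro v hv
  rcases Finset.mem_insert.1 (hM.subset_insert_insert hdom hFM hv) with rfl | hv'
  · exact absurd hab (hM v hv b hbM)
  · exact hv'

theorem maxIndep_insert
    (hdom : ∀ v ∉ F, v ≠ a → v ≠ b → ∃ u ∈ F, G.Adj v u) (hab : G.Adj a b)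
    (hb : IsIndep G ↑(insert b F)) : MaxIndep G (insert b F) := by
  refine ⟨hb, fun M hM hbM => ?_⟩
  have hFM : F ⊆ M := (Finset.subset_insert b F).trans hbM
  exact hbM.antisymm (hM.subset_insert_of_mem hdom hab hFM (hbM (Finset.mem_insert_self b F)))

theorem maxIndep_and_superset_iff
    (hdom : ∀ v ∉ F, v ≠ a → v ≠ b → ∃ u ∈ F, G.Adj v u) (hab : G.Adj a b)
    (hb : IsIndep G ↑(insert b F)) :
    MaxIndep G M ∧ F ⊆ M ↔ M = insert b F ∨ (IsIndep G ↑(insert a F) ∧ M = insert a F) := by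
  have hdom' : ∀ v ∉ F, v ≠ b → v ≠ a → ∃ u ∈ F, G.Adj v u :=
    fun v hv hvb hva => hdom v hv hva hvb
  constructor
  · rintro ⟨⟨hM, hMmax⟩, hFM⟩
    by_cases haM : a ∈ M
    · have hMa : M = insert a F :=
        (hM.subset_insert_of_mem hdom' hab.symm hFM haM).antisymm (Finset.insert_subset haM hFM)
      exact Or.inr ⟨hMa ▸ hM, hMa⟩
    · refine Or.inl (hMmax _ hb fun v hv => ?_)
      exact (Finset.mem_insert.1 (hM.subset_insert_insert hdom hFM hv)).resolve_left
        fun hva => haM (hva ▸ hv)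
  · rintro (rfl | ⟨ha, rfl⟩)
    · exact ⟨maxIndep_insert hdom hab hb, Finset.subset_insert b F⟩
    · exact ⟨maxIndep_insert hdom' hab.symm ha, Finset.subset_insert a F⟩

end IsIndep

section Whisker

variable {n : ℕ} (H : SimpleGraph (Fin n))

@[simp]
theorem whisker_adj_inl_inl {i j : Fin n} :
    (whisker H).Adj (Sum.inl i) (Sum.inl j) ↔ H.Adj i j := by
  simpa [whisker, H.adj_comm j i] using fun h : H.Adj i j => H.ne_of_adj h

@[simp]
theorem whisker_adj_inl_inr {i j : Fin n} :
    (whisker H).Adj (Sum.inl i) (Sum.inr j) ↔ i = j := by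
  simp [whisker, eq_comm]

@[simp]
theorem whisker_adj_inr_inl {i j : Fin n} :
    (whisker H).Adj (Sum.inr i) (Sum.inl j) ↔ i = j := by
  rw [SimpleGraph.adj_comm, whisker_adj_inl_inr, eq_comm]

@[simp]
theorem not_whisker_adj_inr_inr {i j : Fin n} : ¬ (whisker H).Adj (Sum.inr i) (Sum.inr j) := by
  simp [whisker]

variable {S T : Finset (Fin n)} {q : Fin n}

theorem image_inl_union_image_inr :
    S.image Sum.inl ∪ T.image Sum.inr = S.disjSum T := by
  ext (i | i) <;> simp

theorem whisker_dominates (hq : S ∪ T = Finset.univ \ {q}) :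
    ∀ v ∉ S.disjSum T, v ≠ Sum.inl q → v ≠ Sum.inr q →
      ∃ u ∈ S.disjSum T, (whisker H).Adj v u := by
  have hcover : ∀ i ≠ q, i ∈ S ∨ i ∈ T := fun i hi => Finset.mem_union.1 (by simp [hq, hi])
  rintro (i | i) hv hvx hvy
  · have hiT : i ∈ T := (hcover i (by simpa using hvx)).resolve_left (by simpa using hv)
    exact ⟨Sum.inr i, by simpa using hiT, by simp⟩
  · have hiS : i ∈ S := (hcover i (by simpa using hvy)).resolve_right (by simpa using hv)
    exact ⟨Sum.inl i, by simpa using hiS, by simp⟩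

theorem whisker_isIndep_insert_inr (hqS : q ∉ S) (hF : IsIndep (whisker H) ↑(S.disjSum T)) :
    IsIndep (whisker H) ↑(insert (Sum.inr q) (S.disjSum T)) := by
  rw [Finset.coe_insert, isIndep_insert]
  refine ⟨hF, ?_⟩
  rintro (i | i) hi
  · simp only [Finset.mem_coe, Finset.inl_mem_disjSum] at hi
    rw [whisker_adj_inr_inl]
    rintro rfl
    exact hqS hi
  · simp

theorem whisker_isIndep_insert_inl_iff (hqT : q ∉ T) (hF : IsIndep (whisker H) ↑(S.disjSum T)) :
    IsIndep (whisker H) ↑(insert (Sum.inl q) (S.disjSum T)) ↔ IsIndep H ↑(insert q S) := by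
  have hS : IsIndep H ↑S := fun i hi j hj => by
    simpa using hF (Sum.inl i) (by simpa using hi) (Sum.inl j) (by simpa using hj)
  rw [Finset.coe_insert, isIndep_insert, Finset.coe_insert, isIndep_insert]
  simp only [hF, hS, true_and, Finset.mem_coe, Sum.forall, Finset.inl_mem_disjSum,
    Finset.inr_mem_disjSum, whisker_adj_inl_inl, whisker_adj_inl_inr]
  exact and_iff_left fun j hj hqj => hqT (hqj ▸ hj)

end Whisker

theorem facets_containing_face_general {n : ℕ} (H : SimpleGraph (Fin n))
    (S T : Finset (Fin n)) (q : Fin n)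
    (hq : S ∪ T = Finset.univ \ {q})
    (F : Finset (Fin n ⊕ Fin n)) (hFdef : F = S.image Sum.inl ∪ T.image Sum.inr)
    (hF : IsIndep (whisker H) ↑F) :
    ∀ M : Finset (Fin n ⊕ Fin n),
      (MaxIndep (whisker H) M ∧ F ⊆ M) ↔
        (M = F ∪ {Sum.inr q} ∨
          (IsIndep H ↑(insert q S) ∧ M = F ∪ {Sum.inl q})) := by
  rw [image_inl_union_image_inr] at hFdef
  subst hFdef
  obtain ⟨hqS, hqT⟩ : q ∉ S ∧ q ∉ T := Finset.notMem_union.1 (by simp [hq])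
  intro M
  rw [Finset.union_singleton, Finset.union_singleton, ← whisker_isIndep_insert_inl_iff H hqT hF]
  exact maxIndep_and_superset_iff (whisker_dominates H hq) (by simp)
    (whisker_isIndep_insert_inr H hqS hF)

/-- Let `F = {x_i : i ∈ S} ∪ {y_j : j ∈ T}` be an independent set of size
`n - 1` in `w(H)`, with `S, T` disjoint and `S ∪ T = {1,...,n} \ {q}`. The
maximal independent sets of `w(H)` containing `F` are exactly `F ∪ {y_q}`,
and additionally `F ∪ {x_q}` when `{x_i : i ∈ S} ∪ {x_q}` is independent
in `H`. -/
theorem facets_containing_face {n : ℕ} (H : SimpleGraph (Fin n))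
    (S T : Finset (Fin n)) (q : Fin n) (hST : Disjoint S T)
    (hq : S ∪ T = Finset.univ \ {q})
    (F : Finset (Fin n ⊕ Fin n)) (hFdef : F = S.image Sum.inl ∪ T.image Sum.inr)
    (hF : IsIndep (whisker H) ↑F) :
    ∀ M : Finset (Fin n ⊕ Fin n),
      (MaxIndep (whisker H) M ∧ F ⊆ M) ↔
        (M = F ∪ {Sum.inr q} ∨
          (IsIndep H ↑(insert q S) ∧ M = F ∪ {Sum.inl q})) :=
  facets_containing_face_general H S T q hq F hFdef hF
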